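/- For n ≥ 5, the only shapes T ∈ RB_U(n) that never contain Bal_5 as a restriction tree (i.e., for which no 5-element subset A of the leaves satisfies shape(T|_A) = Bal_5) are the comb shape Comb_n and the shape comb(Gir_5, n−4). -/
import Mathlib


/-! ## Rooted binary trees, shapes, restriction, distributions -/

/-- Rooted binary trees with leaves labelled by `α`:
a tree is either a single (labelled) leaf, or an (ordered) pair of subtrees. -/
inductive RBT (α : Type) : Type
  | leaf (a : α) : RBT α
  | node (l r : RBT α) : RBT α
  deriving DecidableEq

namespace RBT

variable {α β : Type}

/-- The multiset of leaf labels of a tree. -/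
def leaves : RBT α → Multiset α
  | leaf a => {a}
  | node l r => leaves l + leaves r

/-- The number of leaves of a tree. -/
def numLeaves : RBT α → ℕ
  | leaf _ => 1
  | node l r => numLeaves l + numLeaves r

/-- Relabel the leaves of a tree. -/
def map (f : α → β) : RBT α → RBT β
  | leaf a => leaf (f a)
  | node l r => node (map f l) (map f r)

end RBT

/-- Unlabelled rooted binary trees. -/
abbrev UTree : Type := RBT Unit

namespace RBT

variable {α : Type}

/-- Forget the leaf labels of a tree. -/
def forget (t : RBT α) : UTree := t.map fun _ => ()

/-- Structural comparison on unlabelled trees (a leaf is smaller than an internal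
node; internal nodes are compared lexicographically on their children). -/
def cmpT : UTree → UTree → Ordering
  | leaf _, leaf _ => .eq
  | leaf _, node _ _ => .lt
  | node _ _, leaf _ => .gt
  | node a b, node c d => (cmpT a c).then (cmpT b d)

/-- Canonical form (AHU) of an unlabelled rooted binary tree: recursively put the
two children of every internal vertex in nondecreasing `cmpT` order.  Two rooted
binary trees are isomorphic (equal as *shapes*) iff their canonical forms are
equal, so canonical forms faithfully encode the set `RB_U` of tree shapes. -/
def canon : UTree → UTree
  | leaf a => leaf a
  | node l r =>
      let l' := canon l
      let r' := canon r
      if cmpT l' r' = Ordering.gt then node r' l' else node l' r'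

/-- The shape (leaf-relabelling isomorphism class, encoded as a canonical form)
of a labelled tree. -/
def shape (t : RBT α) : UTree := canon (forget t)

/-- Restriction `T|_A` of a tree to the leaves with labels in `A`: delete all
leaves outside `A` and suppress the resulting degree-two vertices (the result is
rooted at the most recent common ancestor of `A`); `none` if no leaf survives. -/
def restrict [DecidableEq α] (A : Finset α) : RBT α → Option (RBT α)
  | leaf a => if a ∈ A then some (leaf a) else none
  | node l r =>
      match restrict A l, restrict A r with
      | some l', some r' => some (node l' r')
      | some l', none => some l'
      | none, some r' => some r'
      | none, none => none

end RBT

/-- `T ∈ RB_L(n)`: the leaves of `T` are labelled bijectively by `[n] = {0, …, n-1}`. -/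
def IsPhylo (n : ℕ) (T : RBT ℕ) : Prop := T.leaves = Multiset.range n

instance (n : ℕ) (T : RBT ℕ) : Decidable (IsPhylo n T) :=
  inferInstanceAs (Decidable (T.leaves = Multiset.range n))

/-- `p` is a probability distribution on `RB_L(n)` (viewed as a vector with
coordinates indexed by labelled trees): nonnegative, supported on `RB_L(n)`,
with total mass one. -/
structure IsDist (n : ℕ) (p : RBT ℕ → ℝ) : Prop where
  nonneg : ∀ T, 0 ≤ p T
  supp : ∀ T, ¬ IsPhylo n T → p T = 0
  total : HasSum p 1

/-- `p` is exchangeable: relabelling the leaves by any permutation of `[n]`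
does not change probabilities. -/
def Exchangeable (n : ℕ) (p : RBT ℕ → ℝ) : Prop :=
  ∀ σ : Equiv.Perm ℕ, (∀ i, i < n → σ i < n) → ∀ T : RBT ℕ, p (T.map ⇑σ) = p T

/-- `EX_n`: the exchangeable probability distributions on `RB_L(n)`. -/
def EX (n : ℕ) : Set (RBT ℕ → ℝ) := {p | IsDist n p ∧ Exchangeable n p}

/-- `O(u)`: the labelled trees in `RB_L(n)` whose shape is (the shape of) `u`. -/
def orbitSet (n : ℕ) (u : UTree) : Set (RBT ℕ) :=
  {T | IsPhylo n T ∧ T.shape = RBT.canon u}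

/-- `p_u`: the exchangeable distribution that is uniform on `O(u)` and zero
elsewhere. -/
noncomputable def pShape (n : ℕ) (u : UTree) : RBT ℕ → ℝ := fun T =>
  if IsPhylo n T ∧ T.shape = RBT.canon u then ((orbitSet n u).ncard : ℝ)⁻¹ else 0

/-- Marginalization map `π_n` from distributions on `RB_L(m)` to distributions on
`RB_L(n)`: `π_n(p)(T) = Σ_{S ∈ RB_L(m), S|_{[n]} = T} p(S)`. -/
noncomputable def marg (m n : ℕ) (p : RBT ℕ → ℝ) : RBT ℕ → ℝ := fun T =>
  ∑' S : RBT ℕ, if IsPhylo m S ∧ RBT.restrict (Finset.range n) S = some T then p S else 0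

/-- `EX_n^m = π_n(EX_m)`: the `m`-sampling consistent exchangeable distributions
on `RB_L(n)`. -/
def EXP (n m : ℕ) : Set (RBT ℕ → ℝ) := marg m n '' EX m

/-- `EX_n^∞ = ⋂_{m ≥ n} EX_n^m`: the exchangeable and (infinitely) sampling
consistent distributions on `RB_L(n)`. -/
def EXinf (n : ℕ) : Set (RBT ℕ → ℝ) := ⋂ (m : ℕ) (_ : n ≤ m), EXP n m

/-- The shapes with `n` leaves (`RB_U(n)`), encoded as canonical forms. -/
def ShapeOn (n : ℕ) : Type := {u : UTree // RBT.canon u = u ∧ u.numLeaves = n}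

/-! ## Particular shapes -/

/-- The comb (caterpillar) shape `Comb_k` with `k` leaves. -/
def combU : ℕ → UTree
  | 0 => .leaf ()
  | 1 => .leaf ()
  | n + 2 => .node (.leaf ()) (combU (n + 1))

/-- `comb(t, k)`: the comb with `k` leaves in which one of the two deepest leaves
is replaced by the tree `t`. -/
def combWith (t : UTree) : ℕ → UTree
  | 0 => t
  | 1 => t
  | n + 2 => .node (.leaf ()) (combWith t (n + 1))

/-- The balanced shape `Bal_4` on four leaves (two cherries joined at the root). -/
def bal4U : UTree := .node (.node (.leaf ()) (.leaf ())) (.node (.leaf ()) (.leaf ()))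

/-- The giraffe shape `Gir_5 = comb(Bal_4, 2)` on five leaves. -/
def gir5U : UTree := combWith bal4U 2

/-- The balanced shape `Bal_5` on five leaves (a cherry and a three-leaf comb
joined at the root). -/
def bal5U : UTree := .node (.node (.leaf ()) (.leaf ())) (combU 3)

/-- `bicomb(a, b)`: the shape obtained by joining `Comb_a` and `Comb_b` at a new
root. -/
def bicombU (a b : ℕ) : UTree := .node (combU a) (combU b)

/-- The complete balanced binary tree with `2^k` leaves. -/
def fullBal : ℕ → UTree
  | 0 => .leaf ()
  | k + 1 => .node (fullBal k) (fullBal k)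

/-- A shape is maximally balanced if at every internal vertex the numbers of
leaves of the two child subtrees differ by at most one. -/
def IsMaxBalanced : UTree → Prop
  | .leaf _ => True
  | .node l r =>
      (l.numLeaves ≤ r.numLeaves + 1 ∧ r.numLeaves ≤ l.numLeaves + 1)
        ∧ IsMaxBalanced l ∧ IsMaxBalanced r

/-! ## Counting restriction subtrees -/

/-- Label the leaves of an unlabelled tree `0, 1, 2, …` from left to right
(auxiliary function threading the next fresh label). -/
def labelFrom : UTree → ℕ → RBT ℕ × ℕ
  | .leaf _, k => (.leaf k, k + 1)
  | .node l r, k =>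
      let pl := labelFrom l k
      let pr := labelFrom r pl.2
      (.node pl.1 pr.1, pr.2)

/-- A labelled representative of an unlabelled tree, with distinct leaf labels. -/
def label (u : UTree) : RBT ℕ := (labelFrom u 0).1

/-- The number of `k`-element subsets `A` of the leaves of (a labelled
representative of) `u` such that the restriction tree `u|_A` has shape `s`. -/
def countRestr (u : UTree) (s : UTree) (k : ℕ) : ℕ :=
  (((label u).leaves.toFinset.powersetCard k).filter
    (fun A => Option.map RBT.shape (RBT.restrict A (label u)) = some (RBT.canon s))).card

/-- `c_5(u)`: the number of `5`-element subsets of the leaves of `u` whose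
restriction tree is the five-leaf comb. -/
def c5 (u : UTree) : ℕ := countRestr u (combU 5) 5

/-! ## One-hole contexts (for subtree-swapping statements) -/

/-- One-hole contexts for unlabelled rooted binary trees: a position in a tree at
which a subtree may be substituted. -/
inductive Ctx : Type
  | hole : Ctx
  | nodeL (c : Ctx) (r : UTree) : Ctx
  | nodeR (l : UTree) (c : Ctx) : Ctx

/-- Fill the hole of a context with a tree. -/
def Ctx.fill : Ctx → UTree → UTree
  | .hole, t => t
  | .nodeL c r, t => .node (c.fill t) r
  | .nodeR l c, t => .node l (c.fill t)

/-! ## The multinomial model -/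

/-- A multiset of edges of a tree shape, encoded as the shape with a
multiplicity attached to every vertex (each vertex stands for the edge directly
above it; the root vertex stands for the root edge of the extended tree). -/
inductive MTree : Type
  | leaf (k : ℕ) : MTree
  | node (k : ℕ) (l r : MTree) : MTree
  deriving DecidableEq

namespace MTree

/-- The underlying tree shape of a multiplicity assignment. -/
def strip : MTree → UTree
  | leaf _ => .leaf ()
  | node _ l r => .node (strip l) (strip r)

/-- The total number of chosen edges (with multiplicity). -/
def total : MTree → ℕ
  | leaf k => k
  | node k l r => k + total l + total r

/-- The product of the factorials of the multiplicities (denominator of the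
multinomial coefficient). -/
def factProd : MTree → ℕ
  | leaf k => k.factorial
  | node k l r => k.factorial * factProd l * factProd r

/-- The product `Π_e t_e^{m_A(e)}` of edge-parameter powers, for the parameter
vector assigning `c` to every pendant edge and `0` to every other edge. -/
noncomputable def wProd (c : ℝ) : MTree → ℝ
  | leaf k => c ^ k
  | node k l r => (0 : ℝ) ^ k * wProd c l * wProd c r

/-- Join two optional trees at a new root. -/
def mergeO : Option UTree → Option UTree → Option UTree
  | some l, some r => some (.node l r)
  | some l, none => some l
  | none, some r => some r
  | none, none => none

/-- Attach `k` new leaves along the edge above an (optional) already-built tree. -/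
def attach : ℕ → Option UTree → Option UTree
  | 0, s => s
  | k + 1, s =>
      match attach k s with
      | none => some (.leaf ())
      | some t => some (.node (.leaf ()) t)

/-- `T_A`: attach one new leaf to an edge for each of its occurrences in the
multiset `A`, and restrict the resulting tree to the new leaves. -/
def build : MTree → Option UTree
  | leaf k => attach k none
  | node k l r => attach k (mergeO (build l) (build r))

end MTree

/-- The probability, under the multinomial model on the shape `T` (with edge
parameter `c` on every pendant edge and `0` on every other edge), that a random
multiset `A` of `n` edges yields a tree `T_A` of shape `s`:
`d(s) = Σ_{A, T_A = s} C(n; m_A) Π_e t_e^{m_A(e)}`. -/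
noncomputable def multinomDist (T : UTree) (c : ℝ) (n : ℕ) (s : UTree) : ℝ :=
  ∑' a : MTree,
    if a.strip = T ∧ a.total = n ∧ Option.map RBT.canon a.build = some (RBT.canon s) then
      ((n.factorial : ℝ) / (a.factProd : ℝ)) * MTree.wProd c a
    else 0

/-! ## Auxiliary development for Statement 9 -/

namespace RBT

variable {α β : Type}

/-- A tree is *good* if at every internal vertex one child is a leaf, or both
children have exactly two leaves. -/
def Good : RBT α → Prop
  | leaf _ => True
  | node l r => Good l ∧ Good r ∧
      (l.numLeaves = 1 ∨ r.numLeaves = 1 ∨ (l.numLeaves = 2 ∧ r.numLeaves = 2))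

lemma good_node_def (l r : RBT α) : Good (node l r) = (Good l ∧ Good r ∧
    (l.numLeaves = 1 ∨ r.numLeaves = 1 ∨ (l.numLeaves = 2 ∧ r.numLeaves = 2))) := rfl

lemma one_le_numLeaves : ∀ t : RBT α, 1 ≤ t.numLeaves
  | leaf _ => le_refl 1
  | node l _ => le_trans (one_le_numLeaves l) (Nat.le_add_right _ _)

lemma numLeaves_map (f : α → β) : ∀ t : RBT α, (t.map f).numLeaves = t.numLeaves
  | leaf _ => rfl
  | node l r => by simp [map, numLeaves, numLeaves_map f l, numLeaves_map f r]

lemma good_map (f : α → β) : ∀ t : RBT α, Good (t.map f) ↔ Good t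
  | leaf _ => Iff.rfl
  | node l r => by
      simp [map, good_node_def, good_map f l, good_map f r, numLeaves_map]

lemma card_leaves : ∀ t : RBT α, Multiset.card t.leaves = t.numLeaves
  | leaf _ => rfl
  | node l r => by simp [leaves, numLeaves, card_leaves l, card_leaves r]

lemma cmpT_self : ∀ t : UTree, cmpT t t = .eq
  | leaf _ => rfl
  | node l r => by simp only [cmpT, cmpT_self l, cmpT_self r]; rfl

lemma cmpT_swap : ∀ s t : UTree, cmpT t s = (cmpT s t).swap
  | leaf _, leaf _ => rfl
  | leaf _, node _ _ => rfl
  | node _ _, leaf _ => rfl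
  | node a b, node c d => by
      simp only [cmpT, cmpT_swap a c, cmpT_swap b d]
      cases cmpT a c <;> cases cmpT b d <;> rfl

lemma canon_node (l r : UTree) : canon (node l r) =
    if cmpT (canon l) (canon r) = .gt then node (canon r) (canon l)
    else node (canon l) (canon r) := rfl

lemma numLeaves_canon : ∀ t : UTree, (canon t).numLeaves = t.numLeaves
  | leaf _ => rfl
  | node l r => by
      rw [canon_node]
      split <;> simp [numLeaves, numLeaves_canon l, numLeaves_canon r] <;> omega

lemma good_canon : ∀ t : UTree, Good t → Good (canon t)
  | leaf _, h => h
  | node l r, ⟨hl, hr, hc⟩ => by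
      have hl' := good_canon l hl
      have hr' := good_canon r hr
      have nl := numLeaves_canon l
      have nr := numLeaves_canon r
      rw [canon_node]
      split
      · exact ⟨hr', hl', by omega⟩
      · exact ⟨hl', hr', by omega⟩

lemma canon_canon : ∀ t : UTree, canon (canon t) = canon t
  | leaf _ => rfl
  | node l r => by
      rw [canon_node]
      split
      case isTrue h =>
        rw [canon_node, canon_canon l, canon_canon r,
          if_neg (by rw [cmpT_swap (canon l) (canon r), h]; decide)]
      case isFalse h =>
        rw [canon_node, canon_canon l, canon_canon r, if_neg h]

lemma canon_node_eq {l r : UTree} (h : canon (node l r) = node l r) :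
    canon l = l ∧ canon r = r ∧ cmpT l r ≠ .gt := by
  rw [canon_node] at h
  split at h
  case isTrue hgt =>
    obtain ⟨h1, h2⟩ : canon r = l ∧ canon l = r := by
      exact ⟨(node.injEq _ _ _ _ ▸ h).1, (node.injEq _ _ _ _ ▸ h).2⟩
    have hrl : canon l = canon r := by
      rw [← canon_canon l, h2]
    have : l = r := by rw [← h1, ← hrl, h2]
    rw [h2, h1, this, cmpT_self] at hgt
    exact absurd hgt (by decide)
  case isFalse hgt =>
    obtain ⟨h1, h2⟩ : canon l = l ∧ canon r = r :=
      ⟨(node.injEq _ _ _ _ ▸ h).1, (node.injEq _ _ _ _ ▸ h).2⟩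
    rw [h1, h2] at hgt
    exact ⟨h1, h2, hgt⟩

lemma eq_leaf_of_numLeaves_one : ∀ t : UTree, t.numLeaves = 1 → t = leaf ()
  | leaf _, _ => rfl
  | node l r, h => by
      exfalso
      have h1 := one_le_numLeaves l; have h2 := one_le_numLeaves r
      simp only [numLeaves] at h; omega

lemma eq_cherry_of_numLeaves_two :
    ∀ t : UTree, t.numLeaves = 2 → t = node (leaf ()) (leaf ())
  | leaf _, h => by simp [numLeaves] at h
  | node l r, h => by
      have h1 := one_le_numLeaves l; have h2 := one_le_numLeaves r
      simp only [numLeaves] at h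
      rw [eq_leaf_of_numLeaves_one l (by omega), eq_leaf_of_numLeaves_one r (by omega)]

lemma canon_eq_comb3_of_numLeaves_three :
    ∀ t : UTree, t.numLeaves = 3 → canon t = combU 3
  | leaf _, h => by simp [numLeaves] at h
  | node l r, h => by
      have h1 := one_le_numLeaves l; have h2 := one_le_numLeaves r
      simp only [numLeaves] at h
      rw [canon_node]
      rcases Nat.lt_or_ge l.numLeaves 2 with hl | hl
      · have el : l = leaf () := eq_leaf_of_numLeaves_one l (by omega)
        have er : canon r = node (leaf ()) (leaf ()) :=
          eq_cherry_of_numLeaves_two _ (by rw [numLeaves_canon]; omega)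
        rw [el, er]
        rfl
      · have el : canon l = node (leaf ()) (leaf ()) :=
          eq_cherry_of_numLeaves_two _ (by rw [numLeaves_canon]; omega)
        have er : canon r = leaf () := by
          rw [eq_leaf_of_numLeaves_one r (by omega)]; rfl
        rw [el, er]
        rfl

end RBT

namespace RBT

lemma cmpT_leaf_ne_gt : ∀ t : UTree, cmpT (leaf ()) t ≠ .gt
  | leaf _ => by simp [cmpT]
  | node _ _ => by simp [cmpT]

lemma cmpT_node_leaf (l r : UTree) (a : Unit) : cmpT (node l r) (leaf a) = .gt := rfl

lemma classify4 : ∀ t : UTree, canon t = t → t.numLeaves = 4 →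
    t = combU 4 ∨ t = bal4U
  | leaf _, _, h => by simp [numLeaves] at h
  | node l r, hc, h => by
      obtain ⟨hcl, hcr, hne⟩ := canon_node_eq hc
      have h1 := one_le_numLeaves l; have h2 := one_le_numLeaves r
      simp only [numLeaves] at h
      rcases Nat.lt_or_ge l.numLeaves 2 with hl | hl
      · left
        have el : l = leaf () := eq_leaf_of_numLeaves_one l (by omega)
        have er : r = combU 3 := by
          rw [← hcr]; exact canon_eq_comb3_of_numLeaves_three r (by omega)
        rw [el, er]; rfl
      · rcases Nat.lt_or_ge l.numLeaves 3 with hl2 | hl2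
        · right
          have el : l = node (leaf ()) (leaf ()) :=
            eq_cherry_of_numLeaves_two l (by omega)
          have er : r = node (leaf ()) (leaf ()) :=
            eq_cherry_of_numLeaves_two r (by omega)
          rw [el, er]; rfl
        · exfalso
          have er : r = leaf () := eq_leaf_of_numLeaves_one r (by omega)
          rcases l with a | ⟨l1, l2⟩
          · simp [numLeaves] at hl2
          · rw [er] at hne; exact hne rfl

end RBT

lemma comb_succ (b : ℕ) (hb : 1 ≤ b) :
    combU (b + 1) = RBT.node (.leaf ()) (combU b) := by
  match b, hb with
  | k + 1, _ => rfl

lemma combWith_succ (t : UTree) (b : ℕ) (hb : 1 ≤ b) :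
    combWith t (b + 1) = RBT.node (.leaf ()) (combWith t b) := by
  match b, hb with
  | k + 1, _ => rfl

lemma good_comb : ∀ n, RBT.Good (combU n)
  | 0 => trivial
  | 1 => trivial
  | n + 2 => ⟨trivial, good_comb (n + 1), Or.inl rfl⟩

lemma good_bal4 : RBT.Good bal4U :=
  ⟨⟨trivial, trivial, Or.inl rfl⟩, ⟨trivial, trivial, Or.inl rfl⟩,
    Or.inr (Or.inr ⟨rfl, rfl⟩)⟩

lemma good_gir5 : RBT.Good gir5U := ⟨trivial, good_bal4, Or.inl rfl⟩

lemma good_combWith_gir : ∀ k, RBT.Good (combWith gir5U k)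
  | 0 => good_gir5
  | 1 => good_gir5
  | k + 2 => ⟨trivial, good_combWith_gir (k + 1), Or.inl rfl⟩

lemma canon_comb : ∀ n, RBT.canon (combU n) = combU n
  | 0 => rfl
  | 1 => rfl
  | n + 2 => by
      show RBT.canon (.node (.leaf ()) (combU (n + 1))) = _
      rw [RBT.canon_node, canon_comb (n + 1),
        show RBT.canon (.leaf ()) = .leaf () from rfl,
        if_neg (RBT.cmpT_leaf_ne_gt _)]
      rfl

lemma canon_combWith_gir : ∀ k, RBT.canon (combWith gir5U k) = combWith gir5U k
  | 0 => by decide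
  | 1 => by decide
  | k + 2 => by
      show RBT.canon (.node (.leaf ()) (combWith gir5U (k + 1))) = _
      rw [RBT.canon_node, canon_combWith_gir (k + 1),
        show RBT.canon (.leaf ()) = .leaf () from rfl,
        if_neg (RBT.cmpT_leaf_ne_gt _)]
      rfl

lemma classify_good : ∀ t : UTree, RBT.canon t = t → RBT.Good t →
    5 ≤ t.numLeaves →
    t = combU t.numLeaves ∨ t = combWith gir5U (t.numLeaves - 4)
  | .leaf _, _, _, h5 => by simp [RBT.numLeaves] at h5
  | .node l r, hc, ⟨hgl, hgr, hcond⟩, h5 => by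
      obtain ⟨hcl, hcr, hne⟩ := RBT.canon_node_eq hc
      have h1 := RBT.one_le_numLeaves l; have h2 := RBT.one_le_numLeaves r
      have hnn : (RBT.node l r).numLeaves = l.numLeaves + r.numLeaves := rfl
      rcases hcond with hl1 | hr1 | ⟨hl2, hr2⟩
      · -- left child is a leaf
        have el : l = .leaf () := RBT.eq_leaf_of_numLeaves_one l hl1
        rcases Nat.lt_or_ge r.numLeaves 5 with hr4 | hr5
        · -- r has 4 leaves, n = 5
          have hr4' : r.numLeaves = 4 := by rw [hnn] at h5; omega
          have hn5 : (RBT.node l r).numLeaves = 5 := by omega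
          rcases RBT.classify4 r hcr hr4' with er | er
          · left; rw [hn5, el, er]; rfl
          · right; rw [hn5, el, er]; rfl
        · -- r has ≥ 5 leaves, recurse
          rcases classify_good r hcr hgr hr5 with er | er
          · left
            rw [hnn, hl1, Nat.add_comm, comb_succ _ (by omega), el, ← er]
          · right
            have : l.numLeaves + r.numLeaves - 4 = (r.numLeaves - 4) + 1 := by omega
            rw [hnn, this, combWith_succ _ _ (by omega), el, ← er]
      · -- right child is a leaf: impossible for a canonical tree with ≥ 5 leaves
        exfalso
        have er : r = .leaf () := RBT.eq_leaf_of_numLeaves_one r hr1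
        rcases l with a | ⟨l1, l2⟩
        · simp only [RBT.numLeaves] at h5; omega
        · rw [er] at hne; exact hne rfl
      · exfalso; rw [hnn] at h5; omega

namespace RBT

lemma restrict_node (A : Finset ℕ) (l r : RBT ℕ) :
    restrict A (node l r) = match restrict A l, restrict A r with
      | some l', some r' => some (node l' r')
      | some l', none => some l'
      | none, some r' => some r'
      | none, none => none := by
  cases h1 : restrict A l <;> cases h2 : restrict A r <;> simp [restrict, h1, h2]

lemma numLeaves_restrict_le (A : Finset ℕ) :
    ∀ (t t' : RBT ℕ), restrict A t = some t' → t'.numLeaves ≤ t.numLeaves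
  | leaf a, t', h => by
      by_cases ha : a ∈ A <;> simp [restrict, ha] at h
      rw [← h]
  | node l r, t', h => by
      rw [restrict_node] at h
      have hll := numLeaves_restrict_le A l
      have hrr := numLeaves_restrict_le A r
      cases h1 : restrict A l with
      | none => cases h2 : restrict A r with
        | none => rw [h1, h2] at h; simp at h
        | some r' =>
            rw [h1, h2] at h; simp only [Option.some.injEq] at h
            subst h
            exact le_trans (hrr r' h2) (Nat.le_add_left _ _)
      | some l' => cases h2 : restrict A r with
        | none =>
            rw [h1, h2] at h; simp only [Option.some.injEq] at h
            subst h
            exact le_trans (hll l' h1) (Nat.le_add_right _ _)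
        | some r' =>
            rw [h1, h2] at h; simp only [Option.some.injEq] at h
            subst h
            exact Nat.add_le_add (hll l' h1) (hrr r' h2)

lemma good_restrict (A : Finset ℕ) :
    ∀ (t t' : RBT ℕ), restrict A t = some t' → Good t → Good t'
  | leaf a, t', h, _ => by
      by_cases ha : a ∈ A <;> simp [restrict, ha] at h
      rw [← h]; trivial
  | node l r, t', h, ⟨hgl, hgr, hcond⟩ => by
      rw [restrict_node] at h
      cases h1 : restrict A l with
      | none => cases h2 : restrict A r with
        | none => rw [h1, h2] at h; simp at h
        | some r' =>
            rw [h1, h2] at h; simp only [Option.some.injEq] at h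
            subst h
            exact good_restrict A r _ h2 hgr
      | some l' => cases h2 : restrict A r with
        | none =>
            rw [h1, h2] at h; simp only [Option.some.injEq] at h
            subst h
            exact good_restrict A l _ h1 hgl
        | some r' =>
            rw [h1, h2] at h; simp only [Option.some.injEq] at h
            subst h
            refine ⟨good_restrict A l _ h1 hgl, good_restrict A r _ h2 hgr, ?_⟩
            have e1 := numLeaves_restrict_le A l _ h1
            have e2 := numLeaves_restrict_le A r _ h2
            have e3 := one_le_numLeaves l'
            have e4 := one_le_numLeaves r'
            omega

lemma leaves_restrict (A : Finset ℕ) :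
    ∀ t : RBT ℕ, (restrict A t).elim 0 leaves = t.leaves.filter (· ∈ A)
  | leaf a => by
      by_cases ha : a ∈ A <;>
        simp [restrict, ha, leaves, Multiset.filter_singleton]
  | node l r => by
      have il := leaves_restrict A l
      have ir := leaves_restrict A r
      rw [restrict_node]
      show _ = (l.leaves + r.leaves).filter (· ∈ A)
      rw [Multiset.filter_add, ← il, ← ir]
      cases h1 : restrict A l <;> cases h2 : restrict A r <;>
        simp [leaves]

lemma restrict_eq_some (t : RBT ℕ) (hnd : t.leaves.Nodup) (A : Finset ℕ)
    (hsub : ∀ a ∈ A, a ∈ t.leaves) (hne : A.Nonempty) :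
    ∃ t', restrict A t = some t' ∧ t'.leaves = A.val := by
  have h := leaves_restrict A t
  have hfil : t.leaves.filter (· ∈ A) = A.val := by
    rw [Multiset.Nodup.ext (Multiset.Nodup.filter _ hnd) A.nodup]
    intro a
    simp only [Multiset.mem_filter, Finset.mem_val]
    exact ⟨fun x => x.2, fun x => ⟨hsub a x, x⟩⟩
  cases hres : restrict A t with
  | none =>
      rw [hres] at h
      exfalso
      obtain ⟨a, ha⟩ := hne
      have : a ∈ t.leaves.filter (· ∈ A) := by rw [hfil]; exact ha
      rw [← h] at this
      simp at this
  | some t' =>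
      rw [hres] at h
      exact ⟨t', rfl, by rw [← hfil]; exact h⟩

lemma restrict_congr :
    ∀ (t : RBT ℕ) (A B : Finset ℕ), (∀ a ∈ t.leaves, (a ∈ A ↔ a ∈ B)) →
      restrict A t = restrict B t
  | leaf a, A, B, h => by
      have := h a (by simp [leaves])
      simp only [restrict]
      by_cases ha : a ∈ A
      · rw [if_pos ha, if_pos (this.mp ha)]
      · rw [if_neg ha, if_neg (fun hb => ha (this.mpr hb))]
  | node l r, A, B, h => by
      rw [restrict_node, restrict_node,
        restrict_congr l A B (fun a ha => h a (by simp [leaves, ha])),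
        restrict_congr r A B (fun a ha => h a (by simp [leaves, ha]))]

lemma restrict_eq_none (t : RBT ℕ) (A : Finset ℕ)
    (h : ∀ a ∈ t.leaves, a ∉ A) : restrict A t = none := by
  have hl := leaves_restrict A t
  cases hres : restrict A t with
  | none => rfl
  | some t' =>
      exfalso
      rw [hres] at hl
      have hfil : t.leaves.filter (· ∈ A) = 0 :=
        Multiset.filter_eq_nil.mpr h
      rw [hfil] at hl
      have := card_leaves t'
      have h1 := one_le_numLeaves t'
      rw [show t'.leaves = (0 : Multiset ℕ) from hl] at this
      simp at this
      omega

lemma shape_node (l r : RBT ℕ) :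
    shape (node l r) = canon (node (forget l) (forget r)) := rfl

lemma shape_bal5 (l' r' : RBT ℕ)
    (h : (l'.numLeaves = 2 ∧ r'.numLeaves = 3) ∨
      (l'.numLeaves = 3 ∧ r'.numLeaves = 2)) :
    shape (node l' r') = bal5U := by
  rw [shape_node, canon_node]
  rcases h with ⟨h2, h3⟩ | ⟨h3, h2⟩
  · have el : canon (forget l') = node (leaf ()) (leaf ()) := by
      have : forget l' = node (leaf ()) (leaf ()) :=
        eq_cherry_of_numLeaves_two _ ((numLeaves_map _ _).trans h2)
      rw [this]; rfl
    have er : canon (forget r') = combU 3 :=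
      canon_eq_comb3_of_numLeaves_three _ ((numLeaves_map _ _).trans h3)
    rw [el, er, if_neg (by decide)]
    rfl
  · have el : canon (forget l') = combU 3 :=
      canon_eq_comb3_of_numLeaves_three _ ((numLeaves_map _ _).trans h3)
    have er : canon (forget r') = node (leaf ()) (leaf ()) := by
      have : forget r' = node (leaf ()) (leaf ()) :=
        eq_cherry_of_numLeaves_two _ ((numLeaves_map _ _).trans h2)
      rw [this]; rfl
    rw [el, er, if_pos (by decide)]
    rfl

lemma not_good_bal5 : ¬ Good bal5U := by
  rintro ⟨-, -, h⟩
  simp [numLeaves, combU] at h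

lemma shape_ne_bal5_of_good (t : RBT ℕ) (h : Good t) : shape t ≠ bal5U := by
  intro he
  exact not_good_bal5 (he ▸ good_canon _ ((good_map _ t).mpr h))

end RBT

namespace RBT

lemma exists_bal5_split (l r : RBT ℕ) (hnd : (node l r).leaves.Nodup)
    (kl kr : ℕ) (hk : (kl = 2 ∧ kr = 3) ∨ (kl = 3 ∧ kr = 2))
    (hkl : kl ≤ l.numLeaves) (hkr : kr ≤ r.numLeaves) :
    ∃ A ∈ (node l r).leaves.toFinset.powersetCard 5,
      Option.map shape (restrict A (node l r)) = some bal5U := by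
  have hll : (node l r).leaves = l.leaves + r.leaves := rfl
  rw [hll] at hnd
  obtain ⟨hndl, hndr, hdisj0⟩ := Multiset.nodup_add.mp hnd
  have hdisj : ∀ {a : ℕ}, a ∈ l.leaves → a ∈ r.leaves → False :=
    fun h1 h2 => Multiset.disjoint_left.mp hdisj0 h1 h2
  have hcl : l.leaves.toFinset.card = l.numLeaves := by
    rw [Multiset.toFinset_card_of_nodup hndl, card_leaves]
  have hcr : r.leaves.toFinset.card = r.numLeaves := by
    rw [Multiset.toFinset_card_of_nodup hndr, card_leaves]
  obtain ⟨A₂, hA2sub, hA2card⟩ :=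
    Finset.exists_subset_card_eq (s := l.leaves.toFinset) (n := kl) (by omega)
  obtain ⟨A₃, hA3sub, hA3card⟩ :=
    Finset.exists_subset_card_eq (s := r.leaves.toFinset) (n := kr) (by omega)
  have hmem2 : ∀ a ∈ A₂, a ∈ l.leaves := fun a ha =>
    Multiset.mem_toFinset.mp (hA2sub ha)
  have hmem3 : ∀ a ∈ A₃, a ∈ r.leaves := fun a ha =>
    Multiset.mem_toFinset.mp (hA3sub ha)
  have hAdisj : Disjoint A₂ A₃ := by
    rw [Finset.disjoint_left]
    intro a ha2 ha3
    exact hdisj (hmem2 a ha2) (hmem3 a ha3)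
  refine ⟨A₂ ∪ A₃, ?_, ?_⟩
  · rw [Finset.mem_powersetCard]
    constructor
    · rw [hll, Multiset.toFinset_add]
      exact Finset.union_subset_union hA2sub hA3sub
    · rw [Finset.card_union_of_disjoint hAdisj]
      omega
  · have e1 : restrict (A₂ ∪ A₃) l = restrict A₂ l := by
      apply restrict_congr
      intro a ha
      simp only [Finset.mem_union]
      exact ⟨fun h => h.elim id (fun h3 => absurd ha (hdisj · (hmem3 a h3))),
        Or.inl⟩
    have e2 : restrict (A₂ ∪ A₃) r = restrict A₃ r := by
      apply restrict_congr
      intro a ha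
      simp only [Finset.mem_union]
      refine ⟨fun h => h.elim (fun h2 => absurd (hmem2 a h2) (fun hl' => hdisj hl' ha)) id,
        Or.inr⟩
    obtain ⟨l', hl', hleq⟩ := restrict_eq_some l hndl A₂ hmem2
      (Finset.card_pos.mp (by omega))
    obtain ⟨r', hr', hreq⟩ := restrict_eq_some r hndr A₃ hmem3
      (Finset.card_pos.mp (by omega))
    have hres : restrict (A₂ ∪ A₃) (node l r) = some (node l' r') := by
      rw [restrict_node, e1, e2, hl', hr']
    rw [hres]
    have hnl : l'.numLeaves = kl := by
      rw [← card_leaves, hleq, ← hA2card]; rfl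
    have hnr : r'.numLeaves = kr := by
      rw [← card_leaves, hreq, ← hA3card]; rfl
    simp only [Option.map_some]
    congr 1
    apply shape_bal5
    rcases hk with ⟨e, f⟩ | ⟨e, f⟩
    · exact Or.inl ⟨by omega, by omega⟩
    · exact Or.inr ⟨by omega, by omega⟩

lemma exists_bal5 : ∀ (t : RBT ℕ), t.leaves.Nodup → ¬ Good t →
    ∃ A ∈ t.leaves.toFinset.powersetCard 5,
      Option.map shape (restrict A t) = some bal5U := by
  intro t
  induction t with
  | leaf a => exact fun _ hg => absurd trivial hg
  | node l r ihl ihr =>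
      intro hnd hg
      have hll : (node l r).leaves = l.leaves + r.leaves := rfl
      obtain ⟨hndl, hndr, hdisj0⟩ := Multiset.nodup_add.mp (hll ▸ hnd)
      have hdisj : ∀ {a : ℕ}, a ∈ l.leaves → a ∈ r.leaves → False :=
        fun h1 h2 => Multiset.disjoint_left.mp hdisj0 h1 h2
      have hsubF : l.leaves.toFinset ⊆ (node l r).leaves.toFinset := by
        rw [hll, Multiset.toFinset_add]; exact Finset.subset_union_left
      have hsubF' : r.leaves.toFinset ⊆ (node l r).leaves.toFinset := by
        rw [hll, Multiset.toFinset_add]; exact Finset.subset_union_right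
      by_cases hgl : Good l
      · by_cases hgr : Good r
        · -- bad split at the root
          have hcond : ¬ (l.numLeaves = 1 ∨ r.numLeaves = 1 ∨
              (l.numLeaves = 2 ∧ r.numLeaves = 2)) := fun hc => hg ⟨hgl, hgr, hc⟩
          have h1 := one_le_numLeaves l
          have h2 := one_le_numLeaves r
          rcases Nat.lt_or_ge r.numLeaves 3 with hr3 | hr3
          · exact exists_bal5_split l r hnd 3 2 (Or.inr ⟨rfl, rfl⟩)
              (by omega) (by omega)
          · exact exists_bal5_split l r hnd 2 3 (Or.inl ⟨rfl, rfl⟩)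
              (by omega) (by omega)
        · -- bad vertex inside r
          obtain ⟨A, hA, hres⟩ := ihr hndr hgr
          obtain ⟨hAsub, hAcard⟩ := Finset.mem_powersetCard.mp hA
          refine ⟨A, Finset.mem_powersetCard.mpr ⟨hAsub.trans hsubF', hAcard⟩, ?_⟩
          have hnone : restrict A l = none := by
            apply restrict_eq_none
            intro a ha haA
            exact hdisj ha (Multiset.mem_toFinset.mp (hAsub haA))
          cases hsome : restrict A r with
          | none => rw [hsome] at hres; simp at hres
          | some S =>
              have : restrict A (node l r) = some S := by
                rw [restrict_node, hnone, hsome]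
              rw [this]
              rw [hsome] at hres
              exact hres
      · -- bad vertex inside l
        obtain ⟨A, hA, hres⟩ := ihl hndl hgl
        obtain ⟨hAsub, hAcard⟩ := Finset.mem_powersetCard.mp hA
        refine ⟨A, Finset.mem_powersetCard.mpr ⟨hAsub.trans hsubF, hAcard⟩, ?_⟩
        have hnone : restrict A r = none := by
          apply restrict_eq_none
          intro a ha haA
          exact hdisj (Multiset.mem_toFinset.mp (hAsub haA)) ha
        cases hsome : restrict A l with
        | none => rw [hsome] at hres; simp at hres
        | some S =>
            have : restrict A (node l r) = some S := by
              rw [restrict_node, hnone, hsome]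
            rw [this]
            rw [hsome] at hres
            exact hres

end RBT

lemma labelFrom_snd : ∀ (u : UTree) (k : ℕ), (labelFrom u k).2 = k + u.numLeaves
  | .leaf _, k => rfl
  | .node l r, k => by
      show (labelFrom r (labelFrom l k).2).2 = _
      rw [labelFrom_snd r, labelFrom_snd l]
      show _ = k + (l.numLeaves + r.numLeaves)
      omega

lemma mem_leaves_labelFrom : ∀ (u : UTree) (k a : ℕ),
    a ∈ (labelFrom u k).1.leaves → k ≤ a ∧ a < (labelFrom u k).2
  | .leaf _, k, a, h => by
      simp only [labelFrom, RBT.leaves, Multiset.mem_singleton] at h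
      subst h
      exact ⟨le_refl _, Nat.lt_succ_self _⟩
  | .node l r, k, a, h => by
      have e1 := labelFrom_snd l k
      have e2 := labelFrom_snd r (labelFrom l k).2
      have esnd : (labelFrom (.node l r) k).2 = (labelFrom r (labelFrom l k).2).2 := rfl
      have hfst : (labelFrom (.node l r) k).1.leaves =
          (labelFrom l k).1.leaves + (labelFrom r (labelFrom l k).2).1.leaves := rfl
      rw [hfst, Multiset.mem_add] at h
      rw [esnd]
      rcases h with h | h
      · have := mem_leaves_labelFrom l k a h
        omega
      · have := mem_leaves_labelFrom r (labelFrom l k).2 a h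
        omega

lemma nodup_leaves_labelFrom : ∀ (u : UTree) (k : ℕ), (labelFrom u k).1.leaves.Nodup
  | .leaf _, k => Multiset.nodup_singleton k
  | .node l r, k => by
      have hfst : (labelFrom (.node l r) k).1.leaves =
          (labelFrom l k).1.leaves + (labelFrom r (labelFrom l k).2).1.leaves := rfl
      rw [hfst, Multiset.nodup_add]
      refine ⟨nodup_leaves_labelFrom l k, nodup_leaves_labelFrom r _,
        Multiset.disjoint_left.mpr ?_⟩
      intro a hal har
      have b1 := mem_leaves_labelFrom l k a hal
      have b2 := mem_leaves_labelFrom r (labelFrom l k).2 a har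
      omega

lemma forget_labelFrom : ∀ (u : UTree) (k : ℕ), (labelFrom u k).1.map (fun _ => ()) = u
  | .leaf _, _ => rfl
  | .node l r, k => by
      show RBT.node ((labelFrom l k).1.map _) ((labelFrom r (labelFrom l k).2).1.map _) = _
      rw [forget_labelFrom l, forget_labelFrom r]

/-- For `n ≥ 5`, the only shapes `T ∈ RB_U(n)` that never
contain `Bal_5` as a restriction tree (no `5`-element subset `A` of the leaves
has `shape(T|_A) = Bal_5`) are the comb `Comb_n` and the shape
`comb(Gir_5, n − 4)`. -/
theorem no_bal5_restriction_iff (n : ℕ) (hn : 5 ≤ n)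
    (u : UTree) (hu : RBT.canon u = u) (hun : u.numLeaves = n) :
    (∀ A ∈ (label u).leaves.toFinset.powersetCard 5,
        Option.map RBT.shape (RBT.restrict A (label u)) ≠ some (RBT.canon bal5U)) ↔
      (u = RBT.canon (combU n) ∨ u = RBT.canon (combWith gir5U (n - 4))) := by
  have hcanonbal5 : RBT.canon bal5U = bal5U := by decide
  have hforget : (label u).map (fun _ => ()) = u := forget_labelFrom u 0
  have hnd : (label u).leaves.Nodup := nodup_leaves_labelFrom u 0
  have h1 : RBT.Good u ↔ RBT.Good (label u) := by
    have := RBT.good_map (fun _ => ()) (label u)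
    rw [hforget] at this
    exact this
  constructor
  · intro hno
    have hGood : RBT.Good u := by
      by_contra hbad
      obtain ⟨A, hA, hres⟩ := RBT.exists_bal5 (label u) hnd (fun h => hbad (h1.mpr h))
      exact hno A hA (by rw [hcanonbal5]; exact hres)
    have hcl := classify_good u hu hGood (by omega)
    rw [hun] at hcl
    rcases hcl with h | h
    · left; rw [canon_comb]; exact h
    · right; rw [canon_combWith_gir]; exact h
  · intro hu2 A hA hres
    have hGood : RBT.Good u := by
      rcases hu2 with h | h
      · rw [h, canon_comb]; exact good_comb n
      · rw [h, canon_combWith_gir]; exact good_combWith_gir _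
    rw [hcanonbal5] at hres
    cases hrest : RBT.restrict A (label u) with
    | none => rw [hrest] at hres; simp at hres
    | some T' =>
        rw [hrest] at hres
        simp only [Option.map_some] at hres
        exact RBT.shape_ne_bal5_of_good T'
          (RBT.good_restrict A (label u) T' hrest (h1.mp hGood))
          (Option.some.inj hres)
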